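/- Monadic reflection via shift/reset for the list monad computes list-monad semantics: in a CPS model where shift f = fun k => f (fun x => fun k' => k' (k x)) id specialized to answer type List β, and reify t = reset (return ∘ t), the term reify (fun () => bind-free expression using reflect m := shift (fun k => bind m k)) equals the direct monadic interpretation. In particular, for the two-choice example, reify (fun () => reflect [2,3,4] * reflect [5,6]) = [10,12,15,18,20,24]. -/
import Mathlib

/-- The continuation monad with answer type `List ℤ`. -/
def ContL (α : Type) : Type := (α → List ℤ) → List ℤ

/-- `reset` for answer type `List ℤ`: `reset m = m id`. -/
def resetL (m : ContL (List ℤ)) : List ℤ := m id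

/-- `shift` specialized to answer type `List ℤ`. -/
def shiftL {α : Type} (f : (α → List ℤ) → List ℤ) : ContL α := fun k => f k

/-- Monadic reflection for the list monad: `reflect m = shift (fun k => bind m k)`. -/
def reflectL (m : List ℤ) : ContL ℤ := shiftL (fun k => m.flatMap k)

/-- `reify t = reset (return ∘ t)`: run the body and wrap its result with the
list-monad `return`. -/
def reifyL (t : ContL ℤ) : List ℤ := resetL (fun k => t (fun x => k [x]))

/-- Multiplication lifted pointwise to the continuation monad. -/
def mulC (a b : ContL ℤ) : ContL ℤ := fun k => a (fun x => b (fun y => k (x * y)))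

/-- Monadic reflection via shift/reset computes list-monad semantics: reifying a
body built from `reflect`ed lists equals the direct monadic interpretation; in
particular `reify (fun () => reflect [2,3,4] * reflect [5,6]) = [10,12,15,18,20,24]`. -/
theorem reify_reflect_list_monad :
    (∀ xs ys : List ℤ,
      reifyL (mulC (reflectL xs) (reflectL ys)) =
        xs.flatMap (fun x => ys.flatMap (fun y => [x * y]))) ∧
    reifyL (mulC (reflectL [2, 3, 4]) (reflectL [5, 6])) = [10, 12, 15, 18, 20, 24] := by
  refine ⟨fun xs ys => rfl, by decide⟩
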